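/- Under the hypotheses of the continuous dependence theorem (A1, A2, h(0,u) ≠ 0, λ > ‖A‖/a fixed, uₖ → ū, A xₖ = λ h(xₖ,uₖ)), the full sequence (xₖ) converges to x̄, where x̄ is the unique solution of A x̄ = λ h(x̄, ū). (Every convergent subsequence of the bounded sequence (xₖ) must converge to x̄ by uniqueness, hence xₖ → x̄.) -/

import Mathlib

/-!
Pairing `T x - λ F x = 0` with `x - z` and using strong monotonicity of `F` gives
`(λ a - ‖T‖) ‖x - z‖ ≤ ‖T z - λ F z‖` for every `z`. With `z = 0` this bounds the solutions
`x k`, so a subsequence converges, and its limit `x̄` solves the limit equation. With `z = x̄`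
the right-hand side becomes `λ ‖F x̄ ū - F x̄ (u k)‖ → 0`, so the whole sequence converges to `x̄`.
-/

open scoped InnerProductSpace
open Filter Topology Function

section InnerProductSpace

variable {E : Type*} [NormedAddCommGroup E] [InnerProductSpace ℝ E]

def StronglyMonotoneWith (a : ℝ) (F : E → E) : Prop :=
  ∀ x y, a * ‖x - y‖ ^ 2 ≤ ⟪F x - F y, x - y⟫_ℝ

theorem StronglyMonotoneWith.mul_norm_sub_le {a lam : ℝ} {F : E → E}
    (hF : StronglyMonotoneWith a F) (T : E →L[ℝ] E) (hlam : 0 ≤ lam) {x : E}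
    (hx : T x = lam • F x) (z : E) :
    (lam * a - ‖T‖) * ‖x - z‖ ≤ ‖T z - lam • F z‖ := by
  set r := T z - lam • F z
  set d := x - z
  have hsplit : lam * ⟪F x - F z, d⟫_ℝ = ⟪T d, d⟫_ℝ + ⟪r, d⟫_ℝ := by
    rw [← real_inner_smul_left, ← inner_add_left, smul_sub, ← hx]
    simp only [r, d, map_sub]
    abel_nf
  have hmono : lam * (a * ‖d‖ ^ 2) ≤ lam * ⟪F x - F z, d⟫_ℝ :=
    mul_le_mul_of_nonneg_left (hF x z) hlam
  have hT : ⟪T d, d⟫_ℝ ≤ ‖T‖ * ‖d‖ ^ 2 :=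
    calc ⟪T d, d⟫_ℝ ≤ ‖T d‖ * ‖d‖ := real_inner_le_norm _ _
      _ ≤ ‖T‖ * ‖d‖ * ‖d‖ := by gcongr; exact T.le_opNorm d
      _ = ‖T‖ * ‖d‖ ^ 2 := by ring
  have hr : ⟪r, d⟫_ℝ ≤ ‖r‖ * ‖d‖ := real_inner_le_norm _ _
  rcases (norm_nonneg d).eq_or_lt with hd | hd
  · rw [← hd, mul_zero]
    exact norm_nonneg r
  · refine le_of_mul_le_mul_right ?_ hd
    nlinarith

theorem exists_tendsto_of_stronglyMonotoneWith [ProperSpace E] {M : Type*} [TopologicalSpace M]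
    {F : E → M → E} (hFc : Continuous (uncurry F)) {a : ℝ}
    (hF : ∀ v, StronglyMonotoneWith a (F · v)) {T : E →L[ℝ] E} {lam : ℝ} (hlam : 0 ≤ lam)
    (hTlam : ‖T‖ < lam * a) {u : ℕ → M} {ub : M} (hu : Tendsto u atTop (𝓝 ub))
    {x : ℕ → E} (hx : ∀ k, T (x k) = lam • F (x k) (u k)) :
    ∃ xb, T xb = lam • F xb ub ∧ Tendsto x atTop (𝓝 xb) := by
  set c := lam * a - ‖T‖
  have hc : 0 < c := sub_pos.mpr hTlam
  have hF_at : ∀ {y : ℕ → E} {v : ℕ → M} {yb : E}, Tendsto y atTop (𝓝 yb) →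
      Tendsto v atTop (𝓝 ub) → Tendsto (fun k => F (y k) (v k)) atTop (𝓝 (F yb ub)) := fun hy hv =>
    (hFc.tendsto _).comp (hy.prodMk_nhds hv)
  have hdist : ∀ k z, ‖x k - z‖ ≤ ‖T z - lam • F z (u k)‖ / c := fun k z =>
    (le_div_iff₀' hc).mpr ((hF (u k)).mul_norm_sub_le T hlam (hx k) z)
  obtain ⟨B, hB⟩ := (hF_at tendsto_const_nhds hu).norm.bddAbove_range
  have hbdd : ∀ k, x k ∈ Metric.closedBall 0 (lam * B / c) := fun k => by
    rw [mem_closedBall_iff_norm]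
    refine (hdist k 0).trans ?_
    rw [map_zero, zero_sub, norm_neg, norm_smul, Real.norm_of_nonneg hlam]
    gcongr
    exact hB ⟨k, rfl⟩
  obtain ⟨xb, -, φ, hφ, hxφ⟩ := tendsto_subseq_of_bounded Metric.isBounded_closedBall hbdd
  have hsol : T xb = lam • F xb ub := by
    refine tendsto_nhds_unique ((T.continuous.tendsto xb).comp hxφ) ?_
    simp only [comp_def, hx]
    exact (hF_at hxφ (hu.comp hφ.tendsto_atTop)).const_smul lam
  refine ⟨xb, hsol, tendsto_iff_norm_sub_tendsto_zero.mpr ?_⟩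
  refine squeeze_zero (fun k => norm_nonneg _) (fun k => hdist k xb) ?_
  have hres := tendsto_iff_norm_sub_tendsto_zero.mp (hF_at (tendsto_const_nhds (x := xb)) hu)
  simpa [hsol, ← smul_sub, norm_smul, Real.norm_of_nonneg hlam, norm_sub_rev] using
    (hres.const_mul lam).div_const c

end InnerProductSpace

section Componentwise

variable {ι : Type*}

theorem stronglyMonotoneWith_of_componentwise [Fintype ι] {a : ℝ} {g : ι → ℝ → ℝ}
    (hg : ∀ k z₁ z₂, a * |z₁ - z₂| ^ 2 ≤ (g k z₁ - g k z₂) * (z₁ - z₂))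
    {F : EuclideanSpace ℝ ι → EuclideanSpace ℝ ι} (hF : ∀ x k, F x k = g k (x k)) :
    StronglyMonotoneWith a F := fun x y => by
  rw [EuclideanSpace.norm_sq_eq, Finset.mul_sum, PiLp.inner_apply]
  refine Finset.sum_le_sum fun k _ => ?_
  simpa [hF, mul_comm] using hg k (x k) (y k)

theorem continuous_uncurry_of_componentwise {M : Type*} [TopologicalSpace M]
    {g : ι → ℝ → M → ℝ} (hg : ∀ k, Continuous fun p : ℝ × M => g k p.1 p.2)
    {F : EuclideanSpace ℝ ι → M → EuclideanSpace ℝ ι} (hF : ∀ x v k, F x v k = g k (x k) v) :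
    Continuous (uncurry F) := by
  have hF' : uncurry F = fun p => WithLp.toLp 2 fun k => g k (p.1 k) p.2 := by
    funext p
    ext k
    exact hF p.1 p.2 k
  rw [hF']
  refine (PiLp.continuous_toLp 2 _).comp (continuous_pi fun k => ?_)
  exact (hg k).comp (f := fun p : EuclideanSpace ℝ ι × M => (p.1 k, p.2)) (by fun_prop)

end Componentwise

theorem stmt5_general (n : ℕ) (M : Type*) [MetricSpace M]
    (A : Matrix (Fin n) (Fin n) ℝ)
    (hs : Fin n → ℝ → M → ℝ)
    (hcont : ∀ k, Continuous fun p : ℝ × M => hs k p.1 p.2)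
    (h : EuclideanSpace ℝ (Fin n) → M → EuclideanSpace ℝ (Fin n))
    (hdef : ∀ x u k, h x u k = hs k (x k) u)
    (a : ℝ) (ha : 0 < a)
    (hA2 : ∀ (k : Fin n) (z₁ z₂ : ℝ) (v : M),
      a * |z₁ - z₂| ^ 2 ≤ (hs k z₁ v - hs k z₂ v) * (z₁ - z₂))
    (lam : ℝ) (hlam : ‖Matrix.toEuclideanCLM (𝕜 := ℝ) A‖ / a < lam)
    (u : ℕ → M) (ub : M) (hu : Tendsto u atTop (𝓝 ub))
    (x : ℕ → EuclideanSpace ℝ (Fin n))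
    (hx : ∀ k, Matrix.toEuclideanCLM (𝕜 := ℝ) A (x k) = lam • h (x k) (u k)) :
    ∃ xb : EuclideanSpace ℝ (Fin n),
      Matrix.toEuclideanCLM (𝕜 := ℝ) A xb = lam • h xb ub ∧
      Tendsto x atTop (𝓝 xb) := by
  have hlam0 : 0 ≤ lam := (div_nonneg (norm_nonneg _) ha.le).trans hlam.le
  have hmono (v : M) : StronglyMonotoneWith a (h · v) :=
    stronglyMonotoneWith_of_componentwise (fun k z₁ z₂ => hA2 k z₁ z₂ v) (fun x k => hdef x v k)
  exact exists_tendsto_of_stronglyMonotoneWith (continuous_uncurry_of_componentwise hcont hdef)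
    hmono hlam0 ((div_lt_iff₀ ha).mp hlam) hu hx

theorem stmt5 (n : ℕ) (M : Type*) [MetricSpace M]
    (A : Matrix (Fin n) (Fin n) ℝ) (hA : A.IsSymm)
    (hs : Fin n → ℝ → M → ℝ)
    (hcont : ∀ k, Continuous fun p : ℝ × M => hs k p.1 p.2)
    (h : EuclideanSpace ℝ (Fin n) → M → EuclideanSpace ℝ (Fin n))
    (hdef : ∀ x u k, h x u k = hs k (x k) u)
    (γ ζ θ : ℝ) (hγ : 2 < γ) (hζ : 0 < ζ) (hθ : 0 < θ)
    (hA1 : ∀ (z : EuclideanSpace ℝ (Fin n)) (v : M), θ ≤ ‖z‖ →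
      ζ * ‖z‖ ^ γ ≤ ⟪h z v, z⟫_ℝ)
    (a : ℝ) (ha : 0 < a)
    (hA2 : ∀ (k : Fin n) (z₁ z₂ : ℝ) (v : M),
      a * |z₁ - z₂| ^ 2 ≤ (hs k z₁ v - hs k z₂ v) * (z₁ - z₂))
    (h0 : ∀ u : M, h 0 u ≠ 0)
    (lam : ℝ) (hlam : ‖Matrix.toEuclideanCLM (𝕜 := ℝ) A‖ / a < lam)
    (u : ℕ → M) (ub : M) (hu : Tendsto u atTop (𝓝 ub))
    (x : ℕ → EuclideanSpace ℝ (Fin n))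
    (hx : ∀ k, Matrix.toEuclideanCLM (𝕜 := ℝ) A (x k) = lam • h (x k) (u k)) :
    ∃ xb : EuclideanSpace ℝ (Fin n),
      Matrix.toEuclideanCLM (𝕜 := ℝ) A xb = lam • h xb ub ∧
      Tendsto x atTop (𝓝 xb) :=
  stmt5_general n M A hs hcont h hdef a ha hA2 lam hlam u ub hu x hx
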